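/- If 0 → A → B → C → 0 is a short exact sequence of finitely presented modules over a commutative ring R, then Fitt_R(A) · Fitt_R(C) ⊆ Fitt_R(B). -/

import Mathlib

/-!
Lift generators `w` of `C` to `u` in `B`. Together with the images `f ∘ v` of generators of `A`
they generate `B`. Every relation `N` among the `w` lifts to a combination of the `u` lying in
`ker g = range f`, hence equal to a combination `q` of the `f ∘ v`. So the block matrix
`[[M, -q], [0, N]]` is a relation matrix for the generators `(f ∘ v, u)` of `B`, and its
determinant is `det M * det N`.
-/

/-- The zeroth Fitting ideal of a module `M` over a commutative ring `R`: the ideal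
generated by determinants of square matrices of relations among a finite generating
family of `M`. -/
def fittingIdeal (R : Type*) [CommRing R] (M : Type*) [AddCommGroup M] [Module R M] :
    Ideal R :=
  Ideal.span { r : R | ∃ (n : ℕ) (v : Fin n → M) (A : Matrix (Fin n) (Fin n) R),
    Submodule.span R (Set.range v) = ⊤ ∧ (∀ j, ∑ i, A i j • v i = 0) ∧ r = A.det }

open Matrix Submodule

theorem det_mem_fittingIdeal {R M ι : Type*} [CommRing R] [AddCommGroup M] [Module R M]
    [Fintype ι] [DecidableEq ι] (v : ι → M) (A : Matrix ι ι R)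
    (hv : span R (Set.range v) = ⊤) (hA : ∀ j, ∑ i, A i j • v i = 0) :
    A.det ∈ fittingIdeal R M := by
  let e := Fintype.equivFin ι
  refine Ideal.subset_span ⟨Fintype.card ι, v ∘ e.symm, reindex e e A, ?_, fun j => ?_,
    (det_reindex_self e A).symm⟩
  · rwa [Set.range_comp, Equiv.range_eq_univ, Set.image_univ]
  · simpa only [reindex_apply, submatrix_apply, Function.comp_apply]
      using (e.symm.sum_comp fun i => A i (e.symm j) • v i).trans (hA (e.symm j))

section ShortExact

variable {R A B C ι κ : Type*} [CommRing R] [AddCommGroup A] [Module R A]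
  [AddCommGroup B] [Module R B] [AddCommGroup C] [Module R C]
  {f : A →ₗ[R] B} {g : B →ₗ[R] C} {v : ι → A}

theorem LinearMap.span_range_comp_eq_range (f : A →ₗ[R] B) (hv : span R (Set.range v) = ⊤) :
    span R (Set.range (f ∘ v)) = LinearMap.range f := by
  rw [Set.range_comp, ← map_span, hv, Submodule.map_top]

theorem span_range_sumElim_eq_top_of_exact (hfg : LinearMap.range f = LinearMap.ker g)
    (hv : span R (Set.range v) = ⊤) {u : κ → B} (hu : span R (Set.range (g ∘ u)) = ⊤) :
    span R (Set.range (Sum.elim (f ∘ v) u)) = ⊤ := by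
  have hmap : map g (span R (Set.range u)) = ⊤ := by rw [map_span, ← Set.range_comp, hu]
  rw [Set.Sum.elim_range, span_union, f.span_range_comp_eq_range hv, hfg, sup_comm,
    ← comap_map_eq, hmap, comap_top]

theorem exists_coeffs_of_exact [Fintype ι] [Fintype κ]
    (hfg : LinearMap.range f = LinearMap.ker g) (hv : span R (Set.range v) = ⊤)
    {u : κ → B} {ρ : Type*} (N : Matrix κ ρ R) (hN : ∀ l, ∑ j, N j l • g (u j) = 0) :
    ∃ q : ρ → ι → R, ∀ l, ∑ i, q l i • f (v i) = ∑ j, N j l • u j := by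
  refine Classical.skolem.mp fun l => (mem_span_range_iff_exists_fun R).mp ?_
  change _ ∈ span R (Set.range (f ∘ v))
  rw [f.span_range_comp_eq_range hv, hfg, LinearMap.mem_ker, map_sum]
  simpa only [map_smul] using hN l

theorem sum_fromBlocks_smul_sumElim_eq_zero [Fintype ι] [Fintype κ] {M : Matrix ι ι R}
    {N : Matrix κ κ R} {u : κ → B} {q : κ → ι → R} (hM : ∀ j, ∑ i, M i j • v i = 0)
    (hq : ∀ l, ∑ i, q l i • f (v i) = ∑ j, N j l • u j) (s : ι ⊕ κ) :
    ∑ t, fromBlocks M (of fun i l => -q l i) 0 N t s • Sum.elim (f ∘ v) u t = 0 := by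
  rcases s with j | l
  · simpa [Fintype.sum_sum_type, map_sum] using congrArg f (hM j)
  · simp [Fintype.sum_sum_type, hq l]

end ShortExact

theorem fittingIdeal_mul_le_of_shortExact_general
    (R : Type*) [CommRing R] (A B C : Type*)
    [AddCommGroup A] [Module R A] [AddCommGroup B] [Module R B] [AddCommGroup C] [Module R C]
    (f : A →ₗ[R] B) (g : B →ₗ[R] C)
    (hg : Function.Surjective g)
    (hfg : LinearMap.range f = LinearMap.ker g) :
    fittingIdeal R A * fittingIdeal R C ≤ fittingIdeal R B := by
  rw [fittingIdeal, fittingIdeal, Ideal.span_mul_span', Ideal.span_le]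
  rintro _ ⟨_, ⟨n, v, M, hv, hM, rfl⟩, _, ⟨m, w, N, hw, hN, rfl⟩, rfl⟩
  obtain ⟨u, rfl⟩ := hg.comp_left w
  obtain ⟨q, hq⟩ := exists_coeffs_of_exact hfg hv N hN
  change M.det * N.det ∈ fittingIdeal R B
  rw [← det_fromBlocks_zero₂₁ M (of fun i l => -q l i) N]
  exact det_mem_fittingIdeal _ _ (span_range_sumElim_eq_top_of_exact hfg hv hw)
    (sum_fromBlocks_smul_sumElim_eq_zero hM hq)

/-- If `0 → A → B → C → 0` is a short exact sequence of finitely presented modules over a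
commutative ring `R`, then `Fitt_R(A) · Fitt_R(C) ⊆ Fitt_R(B)`. -/
theorem fittingIdeal_mul_le_of_shortExact
    (R : Type*) [CommRing R] (A B C : Type*)
    [AddCommGroup A] [Module R A] [AddCommGroup B] [Module R B] [AddCommGroup C] [Module R C]
    [Module.FinitePresentation R A] [Module.FinitePresentation R B]
    [Module.FinitePresentation R C]
    (f : A →ₗ[R] B) (g : B →ₗ[R] C)
    (hf : Function.Injective f) (hg : Function.Surjective g)
    (hfg : LinearMap.range f = LinearMap.ker g) :
    fittingIdeal R A * fittingIdeal R C ≤ fittingIdeal R B :=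
  fittingIdeal_mul_le_of_shortExact_general R A B C f g hg hfg
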